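/- arXiv:1206.3502 — 2 statements merged into one kernel-verified Lean document; each statement's English description precedes it below -/
import Mathlib

section
/- Let σ ≥ 2 and ω, c real with 4ω > c². Set κ² = 4ω − c² and α_n = ∫_0^∞ (cosh(σ√(4ω−c²)x) − c/(2√ω))^{−1/σ−n} dx for n = 0, 1. Then the following three inequalities hold: (i) 4(σ−1)ω α₀ − 2√ω c α₀ + (4ω−c²) α₁ > 0; (ii) 4(σ−1)ω α₀ + 2√ω c α₀ − (4ω−c²) α₁ > 0; (iii) c(c²−4ω) α₁ + 2√ω (c² − 4(σ−1)ω) α₀ < 0. Consequently, the Hessian d''(ω,c) of the action, whose determinant equals a positive prefactor times the product of (i) and (ii) and whose trace equals a positive prefactor times the quantity in (iii), has positive determinant and negative trace, so it has no positive eigenvalues: p(d''(ω,c)) = 0. -/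
/-!
Put `B(x) = cosh(σκx) - d` with `d = c / (2√ω) < 1`, so that `α₀ = ∫ B^p` and
`α₁ = ∫ B^(p-1)` for `p = -1/σ`. Since `B > 1 - d` on `(0, ∞)`, `(1 - d) α₁ < α₀`, i.e.
`(2√ω - c) α₁ < 2√ω α₀`; with `σ ≥ 2` this makes both determinant factors positive, and the
trace factor is a combination of them with the negative weights `-(2√ω ± c)/2`. A real `2 × 2`
matrix with positive determinant and negative trace has only negative real eigenvalues, since
`μ² - (tr A) μ + det A = 0`.
-/

open Real MeasureTheory

/-- `α_n(ω,c) = ∫_0^∞ (cosh(σκx) − c/(2√ω))^{−1/σ−n} dx`. -/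
noncomputable def alphaInt (σ ω c : ℝ) (n : ℕ) : ℝ :=
  ∫ x in Set.Ioi (0 : ℝ),
    (Real.cosh (σ * Real.sqrt (4 * ω - c ^ 2) * x) - c / (2 * Real.sqrt ω)) ^
      (-(1 / σ) - (n : ℝ))

open Set

theorem MeasureTheory.setIntegral_pos_of_pos {X : Type*} [MeasurableSpace X] {μ : Measure X}
    {s : Set X} {f : X → ℝ} (hs : MeasurableSet s) (hμs : μ s ≠ 0)
    (hf : IntegrableOn f s μ) (hpos : ∀ x ∈ s, 0 < f x) : 0 < ∫ x in s, f x ∂μ := by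
  rw [setIntegral_pos_iff_support_of_nonneg_ae
    ((ae_restrict_iff' hs).2 (.of_forall fun x hx => (hpos x hx).le)) hf]
  exact (pos_iff_ne_zero.2 hμs).trans_le
    (measure_mono fun x hx => ⟨(hpos x hx).ne', hx⟩)

theorem Matrix.eigenvalue_neg_of_det_pos_of_trace_neg {K : Type*} [Field K] [LinearOrder K]
    [IsStrictOrderedRing K] {A : Matrix (Fin 2) (Fin 2) K} (hdet : 0 < A.det)
    (htr : A.trace < 0) {μ : K} {v : Fin 2 → K} (hv : v ≠ 0) (hAv : A.mulVec v = μ • v) :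
    μ < 0 := by
  have hsing : (A - μ • 1).det = 0 :=
    Matrix.exists_mulVec_eq_zero_iff.mp ⟨v, hv, by
      rw [Matrix.sub_mulVec, Matrix.smul_mulVec, Matrix.one_mulVec, hAv, sub_self]⟩
  have hchar : μ ^ 2 - A.trace * μ + A.det = 0 := by
    rw [← hsing, Matrix.det_fin_two, Matrix.det_fin_two, Matrix.trace_fin_two]
    simp only [Matrix.sub_apply, Matrix.smul_apply, Matrix.one_apply_eq,
      Matrix.one_apply_ne Fin.zero_ne_one, Matrix.one_apply_ne Fin.zero_ne_one.symm, smul_eq_mul]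
    ring
  by_contra! hμ
  nlinarith [mul_nonneg hμ (neg_nonneg.2 htr.le)]

namespace Real

theorem min_one_one_sub_mul_cosh_le (d y : ℝ) :
    min 1 (1 - d) * cosh y ≤ cosh y - d := by
  have := one_le_cosh y
  rcases le_total d 0 with hd0 | hd0
  · nlinarith [min_le_left 1 (1 - d)]
  · nlinarith [min_le_right 1 (1 - d)]

variable {a d p : ℝ}

theorem integrableOn_cosh_mul_sub_rpow (ha : 0 < a) (hd : d < 1) (hp : p < 0) :
    IntegrableOn (fun x => (cosh (a * x) - d) ^ p) (Ioi 0) := by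
  set K := min 1 (1 - d) / 2
  have hK : 0 < K := by positivity
  have hlower (x : ℝ) : K * exp (a * x) ≤ cosh (a * x) - d := by
    have hexp : exp (a * x) ≤ 2 * cosh (a * x) := by
      rw [cosh_eq]; linarith [exp_pos (-(a * x))]
    calc K * exp (a * x) ≤ min 1 (1 - d) * cosh (a * x) := by
          rw [div_mul_eq_mul_div, div_le_iff₀ two_pos, mul_assoc, mul_comm (cosh _)]
          exact mul_le_mul_of_nonneg_left hexp (by positivity)
      _ ≤ cosh (a * x) - d := min_one_one_sub_mul_cosh_le d (a * x)
  have hdom : IntegrableOn (fun x => K ^ p * exp (-(-p * a) * x)) (Ioi 0) :=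
    (exp_neg_integrableOn_Ioi 0 (by nlinarith)).const_mul _
  refine hdom.mono' ?_ (.of_forall fun x => ?_)
  · have hcont : Continuous fun x => cosh (a * x) - d := by fun_prop
    exact (hcont.rpow_const fun x => .inl
      (mul_pos hK (exp_pos _) |>.trans_le (hlower x)).ne').aestronglyMeasurable
  · have hB := mul_pos hK (exp_pos (a * x))
    rw [norm_of_nonneg (rpow_nonneg (hB.trans_le (hlower x)).le p)]
    calc (cosh (a * x) - d) ^ p ≤ (K * exp (a * x)) ^ p :=
          rpow_le_rpow_of_nonpos hB (hlower x) hp.le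
      _ = K ^ p * exp (-(-p * a) * x) := by
        rw [mul_rpow hK.le (exp_pos _).le, ← exp_mul]; ring_nf

theorem integral_cosh_mul_sub_rpow_pos (ha : 0 < a) (hd : d < 1) (hp : p < 0) :
    0 < ∫ x in Ioi 0, (cosh (a * x) - d) ^ p :=
  setIntegral_pos_of_pos measurableSet_Ioi (by simp) (integrableOn_cosh_mul_sub_rpow ha hd hp)
    fun x _ => rpow_pos_of_pos (by linarith [one_le_cosh (a * x)]) p

theorem one_sub_mul_integral_cosh_mul_sub_rpow_sub_one_lt (ha : 0 < a) (hd : d < 1) (hp : p < 0) :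
    (1 - d) * ∫ x in Ioi 0, (cosh (a * x) - d) ^ (p - 1) <
      ∫ x in Ioi 0, (cosh (a * x) - d) ^ p := by
  have hi₀ := integrableOn_cosh_mul_sub_rpow ha hd hp
  have hi₁ := (integrableOn_cosh_mul_sub_rpow ha hd (by linarith : p - 1 < 0)).const_mul (1 - d)
  rw [← integral_const_mul, ← sub_pos, ← integral_sub hi₀ hi₁]
  refine setIntegral_pos_of_pos measurableSet_Ioi (by simp) (hi₀.sub hi₁) fun x hx => ?_
  have hB : 1 - d < cosh (a * x) - d := by
    linarith [one_lt_cosh.2 (mul_pos ha hx).ne']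
  have hB₀ : 0 < cosh (a * x) - d := by linarith
  rw [rpow_sub_one hB₀.ne', sub_pos, mul_div_assoc', div_lt_iff₀ hB₀]
  exact (mul_lt_mul_of_pos_right hB (rpow_pos_of_pos hB₀ p)).trans_eq (mul_comm _ _)

end Real

section HessianFactors

variable {σ s c α₀ α₁ : ℝ}

theorem hessian_det_factor_left_pos (hσ : 2 ≤ σ) (hc : |c| < 2 * s) (h₀ : 0 < α₀)
    (h₁ : 0 < α₁) :
    0 < 4 * (σ - 1) * s ^ 2 * α₀ - 2 * s * c * α₀ + (4 * s ^ 2 - c ^ 2) * α₁ := by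
  obtain ⟨hc₁, hc₂⟩ := abs_lt.1 hc
  have hs : 0 < s := by linarith
  have h₀' : 0 < 2 * s * (2 * (σ - 1) * s - c) * α₀ := by
    have : 0 < 2 * (σ - 1) * s - c := by nlinarith
    positivity
  have h₁' : 0 < (2 * s - c) * (2 * s + c) * α₁ := by
    have : 0 < 2 * s - c := by linarith
    have : 0 < 2 * s + c := by linarith
    positivity
  linarith

theorem hessian_det_factor_right_pos (hσ : 2 ≤ σ) (hc : |c| < 2 * s) (h₀ : 0 < α₀)
    (hcmp : (2 * s - c) * α₁ < 2 * s * α₀) :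
    0 < 4 * (σ - 1) * s ^ 2 * α₀ + 2 * s * c * α₀ - (4 * s ^ 2 - c ^ 2) * α₁ := by
  obtain ⟨hc₁, hc₂⟩ := abs_lt.1 hc
  have hcmp' := mul_lt_mul_of_pos_left hcmp (by linarith : 0 < 2 * s + c)
  have : 0 ≤ 4 * (σ - 2) * s ^ 2 * α₀ := by
    have : 0 ≤ σ - 2 := by linarith
    positivity
  linarith

theorem hessian_trace_factor_neg (hc : |c| < 2 * s)
    (hl : 0 < 4 * (σ - 1) * s ^ 2 * α₀ - 2 * s * c * α₀ + (4 * s ^ 2 - c ^ 2) * α₁)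
    (hr : 0 < 4 * (σ - 1) * s ^ 2 * α₀ + 2 * s * c * α₀ - (4 * s ^ 2 - c ^ 2) * α₁) :
    c * (c ^ 2 - 4 * s ^ 2) * α₁ + 2 * s * (c ^ 2 - 4 * (σ - 1) * s ^ 2) * α₀ < 0 := by
  obtain ⟨hc₁, hc₂⟩ := abs_lt.1 hc
  -- twice the trace factor is `-(2s + c)` times the left factor plus `-(2s - c)` times the right
  have := mul_pos (by linarith : 0 < 2 * s + c) hl
  have := mul_pos (by linarith : 0 < 2 * s - c) hr
  linarith

end HessianFactors

section alphaInt

variable {σ ω c : ℝ}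

theorem abs_lt_two_mul_sqrt (h : c ^ 2 < 4 * ω) : |c| < 2 * √ω :=
  abs_lt_of_sq_lt_sq (by rw [mul_pow, sq_sqrt (by nlinarith [sq_nonneg c])]; linarith)
    (by positivity)

theorem div_two_mul_sqrt_lt_one (h : c ^ 2 < 4 * ω) : c / (2 * √ω) < 1 := by
  have hc := abs_lt_two_mul_sqrt h
  rw [div_lt_one (by linarith [abs_nonneg c])]
  exact (le_abs_self c).trans_lt hc

theorem alphaInt_pos (hσ : 0 < σ) (h : c ^ 2 < 4 * ω) (n : ℕ) : 0 < alphaInt σ ω c n := by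
  have hκ : 0 < √(4 * ω - c ^ 2) := sqrt_pos.2 (by linarith)
  exact integral_cosh_mul_sub_rpow_pos (by positivity) (div_two_mul_sqrt_lt_one h)
    (by have := one_div_pos.2 hσ; have := n.cast_nonneg (α := ℝ); linarith)

theorem sub_mul_alphaInt_one_lt (hσ : 0 < σ) (h : c ^ 2 < 4 * ω) :
    (2 * √ω - c) * alphaInt σ ω c 1 < 2 * √ω * alphaInt σ ω c 0 := by
  have hκ : 0 < √(4 * ω - c ^ 2) := sqrt_pos.2 (by linarith)
  have hs : 0 < √ω := by linarith [abs_lt_two_mul_sqrt h, abs_nonneg c]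
  have key := one_sub_mul_integral_cosh_mul_sub_rpow_sub_one_lt (a := σ * √(4 * ω - c ^ 2))
    (by positivity) (div_two_mul_sqrt_lt_one h) (neg_neg_of_pos (one_div_pos.2 hσ))
  have hfactor : 2 * √ω - c = 2 * √ω * (1 - c / (2 * √ω)) := by field_simp
  rw [hfactor, mul_assoc]
  simpa only [alphaInt, Nat.cast_zero, Nat.cast_one, sub_zero] using
    mul_lt_mul_of_pos_left key (by positivity : (0 : ℝ) < 2 * √ω)

end alphaInt

theorem hessian_negative_definite (σ ω c : ℝ) (hσ : 2 ≤ σ) (h : c ^ 2 < 4 * ω) :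
    (0 < 4 * (σ - 1) * ω * alphaInt σ ω c 0 - 2 * Real.sqrt ω * c * alphaInt σ ω c 0
        + (4 * ω - c ^ 2) * alphaInt σ ω c 1) ∧
    (0 < 4 * (σ - 1) * ω * alphaInt σ ω c 0 + 2 * Real.sqrt ω * c * alphaInt σ ω c 0
        - (4 * ω - c ^ 2) * alphaInt σ ω c 1) ∧
    (c * (c ^ 2 - 4 * ω) * alphaInt σ ω c 1
        + 2 * Real.sqrt ω * (c ^ 2 - 4 * (σ - 1) * ω) * alphaInt σ ω c 0 < 0) ∧
    (∀ A : Matrix (Fin 2) (Fin 2) ℝ, A.IsSymm →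
      A.det = (2 : ℝ) ^ (-(2 / σ) - 4) * σ⁻¹ ^ 2 * (1 + σ) ^ (2 / σ) *
          (4 * ω - c ^ 2) ^ (2 / σ - 1) * ω ^ (-(1 / σ) - 2) *
          (4 * (σ - 1) * ω * alphaInt σ ω c 0 - 2 * Real.sqrt ω * c * alphaInt σ ω c 0
            + (4 * ω - c ^ 2) * alphaInt σ ω c 1) *
          (4 * (σ - 1) * ω * alphaInt σ ω c 0 + 2 * Real.sqrt ω * c * alphaInt σ ω c 0
            - (4 * ω - c ^ 2) * alphaInt σ ω c 1) →
      A.trace = (2 : ℝ) ^ (-(1 / σ) - 2) * σ⁻¹ * (1 + σ) ^ (1 / σ) *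
          (4 * ω - c ^ 2) ^ (1 / σ - 1) * (1 + ω) * ω ^ (-(1 / (2 * σ)) - 3 / 2) *
          (c * (c ^ 2 - 4 * ω) * alphaInt σ ω c 1
            + 2 * Real.sqrt ω * (c ^ 2 - 4 * (σ - 1) * ω) * alphaInt σ ω c 0) →
      0 < A.det ∧ A.trace < 0 ∧
        ∀ (μ : ℝ) (v : Fin 2 → ℝ), v ≠ 0 → A.mulVec v = μ • v → μ < 0) := by
  have hσ₀ : 0 < σ := by linarith
  have hω : 0 < ω := by nlinarith [sq_nonneg c]
  have hκ : 0 < 4 * ω - c ^ 2 := by linarith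
  have hc := abs_lt_two_mul_sqrt h
  have hl := hessian_det_factor_left_pos hσ hc (alphaInt_pos hσ₀ h 0) (alphaInt_pos hσ₀ h 1)
  have hr := hessian_det_factor_right_pos hσ hc (alphaInt_pos hσ₀ h 0)
    (sub_mul_alphaInt_one_lt hσ₀ h)
  have ht := hessian_trace_factor_neg hc hl hr
  rw [sq_sqrt hω.le] at hl hr ht
  refine ⟨hl, hr, ht, fun A _ hdet htr => ?_⟩
  have hdet_pos : 0 < A.det := hdet ▸ mul_pos (mul_pos (by positivity) hl) hr
  have htr_neg : A.trace < 0 := htr ▸ mul_neg_of_pos_of_neg (by positivity) ht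
  exact ⟨hdet_pos, htr_neg, fun μ v hv hAv =>
    Matrix.eigenvalue_neg_of_det_pos_of_trace_neg hdet_pos htr_neg hv hAv⟩
end

section
/- Let σ > 0 and ω, c real with ω > 0 and 4ω > c². Set κ = √(4ω−c²), z = c/(2√ω), and α_n = ∫_0^∞ (cosh(σκx) − z)^{−1/σ−n} dx for n = 0, 1. Define F(z;σ) = (σ−1)² ( ∫_0^∞ (cosh y − z)^{−1/σ} dy )² − ( ∫_0^∞ (cosh y − z)^{−1/σ−1}(z cosh y − 1) dy )². Then 16(σ−1)² ω² α₀² − ( (c²−4ω) α₁ + 2√ω c α₀ )² = (16 ω² / (σ² (4ω−c²))) · F(c/(2√ω); σ). In particular, the left-hand side (which equals det[d''(ω,c)] divided by a positive prefactor) has the same sign as F(c/(2√ω); σ). -/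
/-!
After the substitution `y = σ κ x`, both `α₀` and `α₁` become `(σ κ)⁻¹` times the integrals
`A = ∫ (cosh y − z)^{−1/σ}` and `B = ∫ (cosh y − z)^{−1/σ−1}` with `z = c/(2√ω)`. Writing
`z cosh y − 1 = z (cosh y − z) − (1 − z²)` splits the second integral of `F` as `z A − (1 − z²) B`,
and `(c² − 4ω) B + 2√ω c A = 4ω (z A − (1 − z²) B)`; the identity is then algebra, and the sign
statement follows because `16 ω² / (σ² (4ω − c²))` is positive.
-/

open Real MeasureTheory

/-- The function `F(z;σ)` governing the sign of `det d''`. -/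
noncomputable def Fsig (z σ : ℝ) : ℝ :=
  (σ - 1) ^ 2 * (∫ y in Set.Ioi (0 : ℝ), (Real.cosh y - z) ^ (-(1 / σ))) ^ 2
    - (∫ y in Set.Ioi (0 : ℝ),
        (Real.cosh y - z) ^ (-(1 / σ) - 1) * (z * Real.cosh y - 1)) ^ 2

lemma Real.sign_mul_of_pos_left {a : ℝ} (ha : 0 < a) (x : ℝ) :
    Real.sign (a * x) = Real.sign x := by
  rcases lt_trichotomy x 0 with hx | rfl | hx
  · rw [Real.sign_of_neg hx, Real.sign_of_neg (mul_neg_of_pos_of_neg ha hx)]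
  · simp
  · rw [Real.sign_of_pos hx, Real.sign_of_pos (mul_pos ha hx)]

section CoshSub

variable {z : ℝ}

lemma cosh_sub_pos (hz : z < 1) (y : ℝ) : 0 < cosh y - z := by
  linarith [one_le_cosh y]

lemma mul_exp_le_cosh_sub (hz : z < 1) (y : ℝ) : (1 - max z 0) / 2 * exp y ≤ cosh y - z := by
  have hexp : exp y / 2 ≤ cosh y := by
    rw [cosh_eq]; linarith [exp_pos (-y)]
  calc (1 - max z 0) / 2 * exp y = (1 - max z 0) * (exp y / 2) := by ring
    _ ≤ (1 - max z 0) * cosh y :=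
        mul_le_mul_of_nonneg_left hexp (sub_nonneg.2 (max_lt hz one_pos).le)
    _ ≤ cosh y - z := by nlinarith [le_max_left z 0, le_max_right z 0, one_le_cosh y]

lemma integrableOn_cosh_sub_rpow_Ioi {p : ℝ} (hz : z < 1) (hp : p < 0) :
    IntegrableOn (fun y => (cosh y - z) ^ p) (Set.Ioi 0) := by
  set m := (1 - max z 0) / 2
  have hm : 0 < m := half_pos (sub_pos.2 (max_lt hz one_pos))
  have hdom : IntegrableOn (fun y => m ^ p * exp (p * y)) (Set.Ioi 0) := by
    simpa only [neg_neg, IntegrableOn] using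
      (exp_neg_integrableOn_Ioi 0 (neg_pos.2 hp)).const_mul (m ^ p)
  refine hdom.mono' ?_ (Filter.Eventually.of_forall fun y => ?_)
  · exact ((continuous_cosh.sub continuous_const).rpow_const
      fun y => Or.inl (cosh_sub_pos hz y).ne').aestronglyMeasurable
  · rw [norm_of_nonneg (rpow_nonneg (cosh_sub_pos hz y).le p)]
    calc (cosh y - z) ^ p ≤ (m * exp y) ^ p :=
          rpow_le_rpow_of_nonpos (by positivity) (mul_exp_le_cosh_sub hz y) hp.le
      _ = m ^ p * exp (p * y) := by
          rw [mul_rpow hm.le (exp_pos y).le, ← exp_mul, mul_comm y]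

lemma integral_cosh_sub_rpow_mul {p : ℝ} (hz : z < 1) (hp : p < 0) :
    ∫ y in Set.Ioi 0, (cosh y - z) ^ (p - 1) * (z * cosh y - 1)
      = z * (∫ y in Set.Ioi 0, (cosh y - z) ^ p)
        - (1 - z ^ 2) * ∫ y in Set.Ioi 0, (cosh y - z) ^ (p - 1) := by
  have hsplit : ∀ y, (cosh y - z) ^ (p - 1) * (z * cosh y - 1)
      = z * (cosh y - z) ^ p - (1 - z ^ 2) * (cosh y - z) ^ (p - 1) := fun y => by
    have hrec := rpow_add_one (cosh_sub_pos hz y).ne' (p - 1)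
    rw [sub_add_cancel] at hrec
    rw [hrec]; ring
  simp only [hsplit]
  rw [integral_sub ((integrableOn_cosh_sub_rpow_Ioi hz hp).const_mul z)
    ((integrableOn_cosh_sub_rpow_Ioi hz (by linarith)).const_mul _),
    integral_const_mul, integral_const_mul]

lemma Fsig_eq {σ : ℝ} (hz : z < 1) (hσ : 0 < σ) :
    Fsig z σ = (σ - 1) ^ 2 * (∫ y in Set.Ioi 0, (cosh y - z) ^ (-(1 / σ))) ^ 2
      - (z * (∫ y in Set.Ioi 0, (cosh y - z) ^ (-(1 / σ)))
          - (1 - z ^ 2) * (∫ y in Set.Ioi 0, (cosh y - z) ^ (-(1 / σ) - 1))) ^ 2 := by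
  rw [Fsig, integral_cosh_sub_rpow_mul hz (neg_neg_of_pos (one_div_pos.2 hσ))]

end CoshSub

lemma alphaInt_eq_inv_mul {σ ω c : ℝ} (hσ : 0 < σ) (h : c ^ 2 < 4 * ω) (n : ℕ) :
    alphaInt σ ω c n = (σ * √(4 * ω - c ^ 2))⁻¹ *
      ∫ y in Set.Ioi 0, (cosh y - c / (2 * √ω)) ^ (-(1 / σ) - (n : ℝ)) := by
  have hκ : 0 < σ * √(4 * ω - c ^ 2) := mul_pos hσ (sqrt_pos.2 (by linarith))
  rw [alphaInt, integral_comp_mul_left_Ioi (fun y => (cosh y - c / (2 * √ω)) ^ _) 0 hκ,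
    mul_zero, smul_eq_mul]

lemma det_identity {σ ω c s κ A B : ℝ} (hσ : σ ≠ 0) (hs : s ≠ 0) (hsω : s ^ 2 = ω)
    (hκ : κ ≠ 0) (hκω : κ ^ 2 = 4 * ω - c ^ 2) :
    16 * (σ - 1) ^ 2 * ω ^ 2 * ((σ * κ)⁻¹ * A) ^ 2
        - ((c ^ 2 - 4 * ω) * ((σ * κ)⁻¹ * B) + 2 * s * c * ((σ * κ)⁻¹ * A)) ^ 2
      = (16 * ω ^ 2 / (σ ^ 2 * (4 * ω - c ^ 2)))
        * ((σ - 1) ^ 2 * A ^ 2 - (c / (2 * s) * A - (1 - (c / (2 * s)) ^ 2) * B) ^ 2) := by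
  subst hsω
  rw [← hκω]
  field_simp
  ring

theorem det_sign_via_F (σ ω c : ℝ) (hσ : 0 < σ) (hω : 0 < ω) (h : c ^ 2 < 4 * ω) :
    16 * (σ - 1) ^ 2 * ω ^ 2 * alphaInt σ ω c 0 ^ 2
        - ((c ^ 2 - 4 * ω) * alphaInt σ ω c 1
            + 2 * Real.sqrt ω * c * alphaInt σ ω c 0) ^ 2
      = (16 * ω ^ 2 / (σ ^ 2 * (4 * ω - c ^ 2))) * Fsig (c / (2 * Real.sqrt ω)) σ ∧
    Real.sign
        (16 * (σ - 1) ^ 2 * ω ^ 2 * alphaInt σ ω c 0 ^ 2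
          - ((c ^ 2 - 4 * ω) * alphaInt σ ω c 1
              + 2 * Real.sqrt ω * c * alphaInt σ ω c 0) ^ 2)
      = Real.sign (Fsig (c / (2 * Real.sqrt ω)) σ) := by
  have hs : 0 < √ω := sqrt_pos.2 hω
  have hz : c / (2 * √ω) < 1 := by
    rw [div_lt_one (by positivity)]
    refine lt_of_abs_lt (abs_lt_of_sq_lt_sq ?_ (by positivity))
    rw [mul_pow, sq_sqrt hω.le]; linarith
  have hdisc : 0 < 4 * ω - c ^ 2 := by linarith
  have hdet : 16 * (σ - 1) ^ 2 * ω ^ 2 * alphaInt σ ω c 0 ^ 2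
        - ((c ^ 2 - 4 * ω) * alphaInt σ ω c 1 + 2 * √ω * c * alphaInt σ ω c 0) ^ 2
      = (16 * ω ^ 2 / (σ ^ 2 * (4 * ω - c ^ 2))) * Fsig (c / (2 * √ω)) σ := by
    rw [alphaInt_eq_inv_mul hσ h, alphaInt_eq_inv_mul hσ h, Fsig_eq hz hσ]
    push_cast
    rw [sub_zero]
    exact det_identity hσ.ne' hs.ne' (sq_sqrt hω.le) (sqrt_pos.2 hdisc).ne' (sq_sqrt hdisc.le)
  refine ⟨hdet, ?_⟩
  rw [hdet, Real.sign_mul_of_pos_left (by positivity)]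
end
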